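/- Let D = (V,A) be a digraph containing two opposite arcs a and a' (i.e., s(a') = t(a) and t(a') = s(a)), and let e = {a, a'}. Then B_D(q,y,z) = yz · B_{D∖e}(q,y,z) + (1 − yz) · B_{D/e}(q,y,z), where D∖e is obtained from D by deleting both arcs a and a', and D/e is obtained from D by deleting both arcs a and a' and identifying the two vertices s(a) and t(a). Equivalently, for every positive integer q the corresponding identity holds between the coloring sums defining these B-polynomials. -/

import Mathlib

/-!
The weight `y ^ #ascents * z ^ #descents` of a colouring is a product of arc weights. The two
opposite arcs `a, a'` together contribute `1` if `s a` and `t a` get the same colour and `y z`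
otherwise, i.e. `y z + (1 - y z) [f (s a) = f (t a)]`, and the colourings with
`f (s a) = f (t a)` are exactly the colourings of `D/e` pulled back along `π`. This proves the
identity for every `q ≥ 1`; a polynomial in `q` vanishing at all positive integers is zero.
-/

open Finset

/-- The sum over all `q`-colorings of a digraph of
`y ^ (number of ascents) * z ^ (number of descents)`. -/
def colorSum (V A : Type) [Fintype V] [DecidableEq V] [Fintype A]
    (s t : A → V) (q : ℕ) (y z : ℚ) : ℚ :=
  ∑ f : V → Fin q,
    y ^ (Finset.univ.filter (fun a => f (s a) < f (t a))).card *
    z ^ (Finset.univ.filter (fun a => f (t a) < f (s a))).card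

section ArcWeight

variable {ι R : Type*} [LinearOrder ι] [CommMonoid R]

def arcWeight (y z : R) (i j : ι) : R :=
  (if i < j then y else 1) * (if j < i then z else 1)

theorem arcWeight_mul_arcWeight_swap (y z : R) (i j : ι) :
    arcWeight y z i j * arcWeight y z j i = if i = j then 1 else y * z := by
  rcases lt_trichotomy i j with h | rfl | h
  · simp [arcWeight, h, h.ne, h.not_gt]
  · simp [arcWeight]
  · simp [arcWeight, h, h.ne', h.not_gt, mul_comm]

theorem prod_arcWeight {A V : Type*} [Fintype A] (s t : A → V) (f : V → ι)
    (y z : R) :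
    ∏ b, arcWeight y z (f (s b)) (f (t b)) =
      y ^ #{b | f (s b) < f (t b)} * z ^ #{b | f (t b) < f (s b)} := by
  simp only [arcWeight, prod_mul_distrib, prod_ite, prod_const, one_pow, mul_one]

end ArcWeight

theorem colorSum_eq_sum_prod_arcWeight (V A : Type) [Fintype V] [DecidableEq V] [Fintype A]
    (s t : A → V) (q : ℕ) (y z : ℚ) :
    colorSum V A s t q y z = ∑ f : V → Fin q, ∏ b, arcWeight y z (f (s b)) (f (t b)) := by
  simp only [colorSum, prod_arcWeight]

theorem Fintype.prod_eq_mul_mul_prod_subtype_ne_ne {A M : Type*} [Fintype A] [DecidableEq A]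
    [CommMonoid M] (g : A → M) {a a' : A} (haa' : a ≠ a') :
    ∏ b, g b = g a * g a' * ∏ b : {b : A // b ≠ a ∧ b ≠ a'}, g b := by
  rw [← Finset.prod_subtype ((univ.erase a).erase a') (by simp [and_comm]) g,
    mul_assoc, Finset.mul_prod_erase _ _ (by simp [haa'.symm]),
    Finset.mul_prod_erase _ _ (mem_univ a)]

theorem Finset.sum_comp_eq_sum_filter_factorsThrough {V V' X M : Type*} [Fintype V] [Fintype V']
    [DecidableEq V] [DecidableEq V'] [Fintype X] [DecidableEq X] [AddCommMonoid M] {π : V → V'}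
    (hπ : π.Surjective) (F : (V → X) → M) (p : (V → X) → Prop) [DecidablePred p]
    (hp : ∀ f, p f ↔ f.FactorsThrough π) :
    ∑ g : V' → X, F (g ∘ π) = ∑ f ∈ univ.filter p, F f := by
  have himage : univ.image (· ∘ π) = univ.filter p := by
    ext f
    simp only [mem_image, mem_univ, true_and, mem_filter, hp]
    refine ⟨?_, fun hf => ⟨f ∘ Function.surjInv hπ, ?_⟩⟩
    · rintro ⟨g, rfl⟩ x y hxy
      simp [hxy]
    · funext x
      exact hf (Function.surjInv_eq hπ (π x))
  rw [← himage, sum_image fun g _ g' _ h => hπ.injective_comp_right h]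

theorem Function.factorsThrough_iff_apply_eq_apply {V V' X : Type*} {π : V → V'} {u v : V}
    (hπ : ∀ x y : V, π x = π y ↔ (x = y ∨ ((x = u ∨ x = v) ∧ (y = u ∨ y = v))))
    (f : V → X) : f.FactorsThrough π ↔ f u = f v := by
  refine ⟨fun hf => hf ((hπ _ _).2 (Or.inr ⟨Or.inl rfl, Or.inr rfl⟩)), fun huv x y hxy => ?_⟩
  rcases (hπ x y).1 hxy with rfl | ⟨rfl | rfl, rfl | rfl⟩ <;> simp [huv]

theorem colorSum_deletion_contraction (V A : Type) [Fintype V] [DecidableEq V]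
    [Fintype A] [DecidableEq A]
    (s t : A → V) {a a' : A} (haa' : a ≠ a') (hs : s a' = t a) (ht : t a' = s a)
    (V' : Type) [Fintype V'] [DecidableEq V'] {π : V → V'}
    (hπsurj : π.Surjective)
    (hπ : ∀ x y : V, π x = π y ↔
      (x = y ∨ ((x = s a ∨ x = t a) ∧ (y = s a ∨ y = t a))))
    (q : ℕ) (y z : ℚ) :
    colorSum V A s t q y z =
      y * z * colorSum V {b : A // b ≠ a ∧ b ≠ a'} (fun b => s b.1) (fun b => t b.1) q y z +
      (1 - y * z) * colorSum V' {b : A // b ≠ a ∧ b ≠ a'}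
        (fun b => π (s b.1)) (fun b => π (t b.1)) q y z := by
  set W : (V → Fin q) → ℚ := fun f =>
    ∏ b : {b : A // b ≠ a ∧ b ≠ a'}, arcWeight y z (f (s b)) (f (t b))
  have hsplit (f : V → Fin q) : ∏ b, arcWeight y z (f (s b)) (f (t b)) =
      y * z * W f + if f (s a) = f (t a) then (1 - y * z) * W f else 0 := by
    rw [Fintype.prod_eq_mul_mul_prod_subtype_ne_ne _ haa', hs, ht,
      arcWeight_mul_arcWeight_swap]
    split_ifs <;> ring
  have hcon : colorSum V' {b : A // b ≠ a ∧ b ≠ a'}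
      (fun b => π (s b.1)) (fun b => π (t b.1)) q y z = ∑ f with f (s a) = f (t a), W f := by
    rw [colorSum_eq_sum_prod_arcWeight]
    exact sum_comp_eq_sum_filter_factorsThrough hπsurj W _
      fun f => (Function.factorsThrough_iff_apply_eq_apply hπ f).symm
  rw [hcon, colorSum_eq_sum_prod_arcWeight, colorSum_eq_sum_prod_arcWeight]
  simp only [hsplit, sum_add_distrib, ← mul_sum, sum_ite, sum_const_zero, add_zero]
  rfl

theorem MvPolynomial.eq_of_eval_natCast_eq {K : Type*} [CommRing K] [IsDomain K] [CharZero K]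
    {P Q : MvPolynomial (Fin 3) K}
    (h : ∀ q : ℕ, 0 < q → ∀ y z : K, eval ![(q : K), y, z] P = eval ![(q : K), y, z] Q) :
    P = Q := by
  refine funext_set ![Set.range (fun n : ℕ => ((n + 1 : ℕ) : K)), .univ, .univ]
    (fun i => ?_) fun x hx => ?_
  · fin_cases i
    · exact Set.infinite_range_of_injective fun m n h => by simpa using h
    all_goals exact Set.infinite_univ
  · obtain ⟨n, hn⟩ := hx 0 (Set.mem_univ _)
    have hx : x = ![((n + 1 : ℕ) : K), x 1, x 2] := by
      funext i; fin_cases i <;> simp [hn]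
    rw [hx]
    exact h _ n.succ_pos _ _

/-- if a digraph `D = (V,A)` contains two opposite arcs `a, a'`
(`s a' = t a`, `t a' = s a`) and `e = {a, a'}`, then
`B_D(q,y,z) = yz · B_{D∖e}(q,y,z) + (1 − yz) · B_{D/e}(q,y,z)`.
Here `D∖e` has arc set `{b : A // b ≠ a ∧ b ≠ a'}`, and `D/e` is realized by any
vertex set `V'` together with a surjection `π : V → V'` identifying exactly `s a`
and `t a` (its arcs are those of `D∖e`, with endpoints pushed forward by `π`). -/
theorem B_deletion_contraction_edge (V A : Type) [Fintype V] [DecidableEq V]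
    [Fintype A] [DecidableEq A]
    (s t : A → V) (a a' : A) (haa' : a ≠ a') (hs : s a' = t a) (ht : t a' = s a)
    (V' : Type) [Fintype V'] [DecidableEq V'] (π : V → V')
    (hπsurj : Function.Surjective π)
    (hπ : ∀ x y : V, π x = π y ↔
      (x = y ∨ ((x = s a ∨ x = t a) ∧ (y = s a ∨ y = t a))))
    (B Bdel Bcon : MvPolynomial (Fin 3) ℚ)
    (hB : ∀ q : ℕ, 0 < q → ∀ y z : ℚ,
      MvPolynomial.eval ![(q : ℚ), y, z] B = colorSum V A s t q y z)
    (hBdel : ∀ q : ℕ, 0 < q → ∀ y z : ℚ,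
      MvPolynomial.eval ![(q : ℚ), y, z] Bdel =
        colorSum V {b : A // b ≠ a ∧ b ≠ a'} (fun b => s b.1) (fun b => t b.1) q y z)
    (hBcon : ∀ q : ℕ, 0 < q → ∀ y z : ℚ,
      MvPolynomial.eval ![(q : ℚ), y, z] Bcon =
        colorSum V' {b : A // b ≠ a ∧ b ≠ a'}
          (fun b => π (s b.1)) (fun b => π (t b.1)) q y z) :
    ∀ q y z : ℚ,
      MvPolynomial.eval ![q, y, z] B =
        y * z * MvPolynomial.eval ![q, y, z] Bdel +
        (1 - y * z) * MvPolynomial.eval ![q, y, z] Bcon := by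
  have hpoly : B = .X 1 * .X 2 * Bdel + (1 - .X 1 * .X 2) * Bcon := by
    refine MvPolynomial.eq_of_eval_natCast_eq fun q hq y z => ?_
    simp [hB q hq, hBdel q hq, hBcon q hq,
      colorSum_deletion_contraction V A s t haa' hs ht V' hπsurj hπ]
  intro q y z
  simp [hpoly]
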